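/- Let ε ∈ [0,1), M > 1, and let 𝓟 and 𝓔 be nonempty sets of density matrices on ℂ^d. Then there exists a CPTP map F from d×d complex matrices to 2×2 complex matrices satisfying T(F(ρ), |1⟩⟨1|) ≤ ε for all ρ ∈ 𝓟 and F(τ) = π_M for all τ ∈ 𝓔, if and only if there exists a test E (Hermitian with 0 ≤ E ≤ I) such that tr[Eτ] = 1/M for all τ ∈ 𝓔 and tr[(I−E)ρ] ≤ ε for all ρ ∈ 𝓟. -/

import Mathlib

open Matrix ComplexOrder

/-- Trace norm of a complex matrix: the trace of `sqrt(AᴴA)` (sum of singular values). -/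
noncomputable def traceNorm {n : Type*} [Fintype n] [DecidableEq n]
    (A : Matrix n n ℂ) : ℝ :=
  ((((Matrix.posSemidef_conjTranspose_mul_self A).1.eigenvectorUnitary : Matrix n n ℂ) *
      Matrix.diagonal (((↑) : ℝ → ℂ) ∘ Real.sqrt ∘ (Matrix.posSemidef_conjTranspose_mul_self A).1.eigenvalues) *
      (star (Matrix.posSemidef_conjTranspose_mul_self A).1.eigenvectorUnitary : Matrix n n ℂ)).trace).re

/-- Trace distance `T(X,Y) = ‖X - Y‖₁ / 2`. -/
noncomputable def traceDist {n : Type*} [Fintype n] [DecidableEq n]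
    (X Y : Matrix n n ℂ) : ℝ :=
  traceNorm (X - Y) / 2

/-- A density matrix: positive semidefinite with unit trace. -/
def IsDensityMatrix {n : Type*} [Fintype n] (ρ : Matrix n n ℂ) : Prop :=
  ρ.PosSemidef ∧ ρ.trace = 1

/-- The battery Gibbs state `π_M = diag(1 - 1/M, 1/M)`. -/
noncomputable def piM (M : ℝ) : Matrix (Fin 2) (Fin 2) ℂ :=
  Matrix.diagonal ![((1 - 1/M : ℝ) : ℂ), ((1/M : ℝ) : ℂ)]

/-- The excited battery state `|1⟩⟨1| = diag(0,1)`. -/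
def ket1 : Matrix (Fin 2) (Fin 2) ℂ :=
  Matrix.diagonal ![0, 1]

/-- A test (POVM effect): `0 ≤ E ≤ I`. -/
def IsTest {n : Type*} [Fintype n] [DecidableEq n] (E : Matrix n n ℂ) : Prop :=
  E.PosSemidef ∧ (1 - E).PosSemidef

/-- Choi matrix `Σ_{ij} E_{ij} ⊗ F(E_{ij})` of a linear map on matrices. -/
noncomputable def choiMatrix {n m : Type*} [Fintype n] [DecidableEq n] [Fintype m]
    (F : Matrix n n ℂ →ₗ[ℂ] Matrix m m ℂ) :
    Matrix (n × m) (n × m) ℂ :=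
  fun p q => F (Matrix.single p.1 q.1 1) p.2 q.2

/-- Completely positive (positive semidefinite Choi matrix) and trace preserving. -/
def IsCPTP {n m : Type*} [Fintype n] [DecidableEq n] [Fintype m]
    (F : Matrix n n ℂ →ₗ[ℂ] Matrix m m ℂ) : Prop :=
  (choiMatrix F).PosSemidef ∧ ∀ X, (F X).trace = X.trace

/-- `n`-fold Kronecker (tensor) power of a `2 × 2` matrix, indexed by bit strings. -/
def tensPow (A : Matrix (Fin 2) (Fin 2) ℂ) (n : ℕ) :
    Matrix (Fin n → Fin 2) (Fin n → Fin 2) ℂ :=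
  fun x y => ∏ i, A (x i) (y i)

/-- `ε`-ball (in trace distance) of density matrices around a set `𝓟`. -/
noncomputable def metBall {n : Type*} [Fintype n] [DecidableEq n]
    (ε : ℝ) (P : Set (Matrix n n ℂ)) : Set (Matrix n n ℂ) :=
  {ω | IsDensityMatrix ω ∧ ∃ ρ ∈ P, traceDist ω ρ ≤ ε}

/-!
Measuring the qubit output of a channel `F` in the standard basis is the same as performing the
two-outcome test `E = F†(|1⟩⟨1|)`, since `tr[E σ] = ⟨1|F(σ)|1⟩`; conversely a test `E` gives the
measure-and-prepare channel `σ ↦ tr[(1 - E) σ] |0⟩⟨0| + tr[E σ] |1⟩⟨1|`, which sends every `τ`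
with `tr[E τ] = 1/M` to `π_M`. The only quantitative input is that a traceless `2 × 2` matrix `A`
has `‖A‖₁ ≥ 2 Re A₀₀`, with equality for `diag(p, -p)`, `p ≥ 0`; both follow from the closed form
`‖A‖₁ = √(Σ |Aᵢⱼ|² + 2 |det A|)`.
-/

open scoped MatrixOrder

lemma traceNorm_eq_trace_sqrt {n : Type*} [Fintype n] [DecidableEq n] (A : Matrix n n ℂ) :
    traceNorm A = (CFC.sqrt (Aᴴ * A)).trace.re := by
  rw [CFC.sqrt_eq_real_sqrt _ (posSemidef_conjTranspose_mul_self A).nonneg,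
    cfcₙ_eq_cfc (hf0 := Real.sqrt_zero),
    (posSemidef_conjTranspose_mul_self A).1.cfc_eq, IsHermitian.cfc, Unitary.conjStarAlgAut_apply]
  rfl

lemma mul_self_eq_trace_smul_sub_det_smul_fin_two (A : Matrix (Fin 2) (Fin 2) ℂ) :
    A * A = A.trace • A - A.det • (1 : Matrix (Fin 2) (Fin 2) ℂ) := by
  ext i j
  fin_cases i <;> fin_cases j <;>
    simp [mul_apply, Fin.sum_univ_two, trace_fin_two, det_fin_two, one_apply] <;> ring

/-- For `H = AᴴA`, Cayley–Hamilton gives `(H + √(det H))² = (tr H + 2√(det H)) H`, so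
`√H = (H + |det A|) / √(tr H + 2 |det A|)`. -/
lemma traceNorm_fin_two (A : Matrix (Fin 2) (Fin 2) ℂ) :
    traceNorm A = √(∑ i, ∑ j, Complex.normSq (A i j) + 2 * ‖A.det‖) := by
  set t : ℝ := ∑ i, ∑ j, Complex.normSq (A i j)
  set δ : ℝ := ‖A.det‖
  set s : ℝ := √(t + 2 * δ)
  set H : Matrix (Fin 2) (Fin 2) ℂ := Aᴴ * A
  have hH : H.PosSemidef := posSemidef_conjTranspose_mul_self A
  have htr : H.trace = t := by
    simp [H, t, trace, mul_apply, Fin.sum_univ_two, Complex.normSq_eq_conj_mul_self]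
    ring
  have hdet : H.det = ((δ ^ 2 : ℝ) : ℂ) := by
    rw [det_mul, det_conjTranspose, Complex.star_def, ← Complex.normSq_eq_conj_mul_self,
      Complex.normSq_eq_norm_sq]
  have ht0 : 0 ≤ t :=
    Finset.sum_nonneg fun i _ => Finset.sum_nonneg fun j _ => Complex.normSq_nonneg _
  have hδ0 : 0 ≤ δ := norm_nonneg _
  have hs : s ^ 2 = t + 2 * δ := Real.sq_sqrt (by positivity)
  have hsq : (H + (δ : ℂ) • 1) * (H + (δ : ℂ) • 1) = ((s ^ 2 : ℝ) : ℂ) • H := by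
    have hCH := mul_self_eq_trace_smul_sub_det_smul_fin_two H
    rw [htr, hdet] at hCH
    simp only [add_mul, mul_add, smul_mul_assoc, mul_smul_comm, one_mul, mul_one, hCH, hs]
    push_cast
    module
  set B : Matrix (Fin 2) (Fin 2) ℂ := ((s⁻¹ : ℝ) : ℂ) • (H + (δ : ℂ) • 1)
  have hB : B * B = H := by
    rcases eq_or_ne s 0 with hs0 | hs0
    · have hA : A = 0 := by
        rw [← trace_conjTranspose_mul_self_eq_zero_iff]
        change H.trace = 0
        have : t + 2 * δ = 0 := by rw [← hs, hs0]; ring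
        rw [htr]
        exact_mod_cast (by linarith : t = 0)
      simp [B, H, hA, hs0]
    · rw [smul_mul_smul_comm, hsq, smul_smul, ← Complex.ofReal_mul, ← Complex.ofReal_mul]
      field_simp
      simp
  have hBnonneg : 0 ≤ B :=
    (hH.add (PosSemidef.one.smul (by positivity))).smul (by positivity) |>.nonneg
  rw [traceNorm_eq_trace_sqrt, CFC.sqrt_unique hB hBnonneg, trace_smul, trace_add, trace_smul,
    htr, trace_one, Fintype.card_fin]
  have : s⁻¹ * (t + δ * 2) = s := by
    rcases eq_or_ne s 0 with hs0 | hs0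
    · simp [hs0]
    · field_simp; linarith
  simpa [← Complex.ofReal_ofNat, ← Complex.ofReal_mul, ← Complex.ofReal_add] using this

lemma two_mul_re_le_traceNorm_of_trace_eq_zero (A : Matrix (Fin 2) (Fin 2) ℂ)
    (hA : A.trace = 0) : 2 * (A 0 0).re ≤ traceNorm A := by
  have h11 : A 1 1 = -A 0 0 := by rw [trace_fin_two] at hA; linear_combination hA
  rw [traceNorm_fin_two, det_fin_two, h11]
  simp only [Fin.sum_univ_two, h11, Complex.normSq_eq_norm_sq, norm_neg]
  set a := A 0 0
  set b := A 0 1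
  set c := A 1 0
  have hbc : ‖a‖ ^ 2 ≤ ‖a * -a - b * c‖ + ‖b‖ * ‖c‖ := by
    calc ‖a‖ ^ 2 = ‖-(a * -a - b * c) - b * c‖ := by rw [← norm_pow]; congr 1; ring
      _ ≤ ‖a * -a - b * c‖ + ‖b‖ * ‖c‖ := by
        simpa only [norm_neg, norm_mul] using norm_sub_le (-(a * -a - b * c)) (b * c)
  refine (mul_le_mul_of_nonneg_left (Complex.re_le_norm a) zero_le_two).trans
    (Real.le_sqrt_of_sq_le ?_)
  nlinarith [sq_nonneg (‖b‖ - ‖c‖)]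

lemma traceNorm_diagonal_fin_two (p q : ℂ) : traceNorm (diagonal ![p, q]) = ‖p‖ + ‖q‖ := by
  rw [traceNorm_fin_two, det_fin_two]
  simp only [Fin.sum_univ_two, diagonal_apply_eq, ne_eq, zero_ne_one, one_ne_zero,
    not_false_eq_true, diagonal_apply_ne, Complex.normSq_eq_norm_sq, norm_zero,
    Matrix.cons_val_zero, Matrix.cons_val_one, mul_zero, sub_zero, norm_mul]
  rw [← Real.sqrt_sq (by positivity : 0 ≤ ‖p‖ + ‖q‖)]
  congr 1
  ring

lemma re_apply_zero_zero_le_traceDist_ket1 (X : Matrix (Fin 2) (Fin 2) ℂ) (hX : X.trace = 1) :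
    (X 0 0).re ≤ traceDist X ket1 := by
  have h := two_mul_re_le_traceNorm_of_trace_eq_zero (X - ket1)
    (by simp [trace_sub, hX, ket1])
  rw [show (X - ket1) 0 0 = X 0 0 by simp [ket1]] at h
  rw [traceDist]
  linarith

lemma traceDist_diagonal_ket1 (p q : ℂ) (h : p + q = 1) :
    traceDist (diagonal ![p, q]) ket1 = ‖p‖ := by
  have hdiff : diagonal ![p, q] - ket1 = diagonal ![p, -p] := by
    rw [ket1, diagonal_sub]
    congr 1
    ext i
    fin_cases i
    · simp
    · simp only [Fin.mk_one, Matrix.cons_val_one, Matrix.cons_val_zero]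
      linear_combination h
  rw [traceDist, hdiff, traceNorm_diagonal_fin_two, norm_neg]
  ring

lemma Matrix.PosSemidef.trace_mul_nonneg {n : Type*} [Fintype n] [DecidableEq n]
    {A B : Matrix n n ℂ} (hA : A.PosSemidef) (hB : B.PosSemidef) : 0 ≤ (A * B).trace := by
  have hsqrt : (CFC.sqrt B).PosSemidef := nonneg_iff_posSemidef.mp (CFC.sqrt_nonneg B)
  rw [← CFC.sqrt_mul_sqrt_self B hB.nonneg, ← Matrix.mul_assoc, trace_mul_cycle]
  simpa only [hsqrt.1.eq] using (hA.conjTranspose_mul_mul_same (CFC.sqrt B)).trace_nonneg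

lemma trace_one_sub_mul_add_trace_mul {n : Type*} [Fintype n] [DecidableEq n]
    (E X : Matrix n n ℂ) : ((1 - E) * X).trace + (E * X).trace = X.trace := by
  rw [← trace_add, ← Matrix.add_mul, sub_add_cancel, Matrix.one_mul]

section Channel

open scoped Kronecker

variable {n m : Type*} [Fintype n] [DecidableEq n]

/-- The Heisenberg-picture effect `F†(|a⟩⟨a|)`. -/
def effectOf (F : Matrix n n ℂ →ₗ[ℂ] Matrix m m ℂ) (a : m) : Matrix n n ℂ :=
  of fun i j => F (single j i 1) a a

lemma trace_effectOf_mul (F : Matrix n n ℂ →ₗ[ℂ] Matrix m m ℂ) (a : m) (X : Matrix n n ℂ) :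
    (effectOf F a * X).trace = F X a a := by
  have hX : X = ∑ i, ∑ j, X i j • single i j 1 := by
    simpa only [smul_single, smul_eq_mul, mul_one] using matrix_eq_sum_single X
  conv_rhs => rw [hX]
  simp only [map_sum, map_smul, Matrix.sum_apply, Matrix.smul_apply, smul_eq_mul, trace,
    diag_apply, mul_apply, effectOf, of_apply]
  rw [Finset.sum_comm]
  exact Finset.sum_congr rfl fun i _ => Finset.sum_congr rfl fun j _ => mul_comm _ _

variable [Fintype m]

lemma posSemidef_effectOf {F : Matrix n n ℂ →ₗ[ℂ] Matrix m m ℂ}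
    (hF : (choiMatrix F).PosSemidef) (a : m) : (effectOf F a).PosSemidef :=
  (hF.submatrix fun i => (i, a)).transpose

lemma sum_effectOf {F : Matrix n n ℂ →ₗ[ℂ] Matrix m m ℂ} (hF : ∀ X, (F X).trace = X.trace) :
    ∑ a, effectOf F a = 1 := by
  ext i j
  calc (∑ a, effectOf F a) i j = (F (single j i 1)).trace := by
        simp only [Matrix.sum_apply, effectOf, of_apply, trace, diag_apply]
    _ = (single j i 1).trace := hF _
    _ = (1 : Matrix n n ℂ) i j := by
        rcases eq_or_ne i j with rfl | hij
        · simp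
        · simp [hij, trace_single_eq_of_ne (h := hij.symm)]

lemma one_sub_effectOf_one {F : Matrix n n ℂ →ₗ[ℂ] Matrix (Fin 2) (Fin 2) ℂ}
    (hF : ∀ X, (F X).trace = X.trace) : 1 - effectOf F 1 = effectOf F 0 := by
  rw [← sum_effectOf hF, Fin.sum_univ_two, add_sub_cancel_right]

variable [DecidableEq m]

def measureChannel (E : m → Matrix n n ℂ) : Matrix n n ℂ →ₗ[ℂ] Matrix m m ℂ where
  toFun X := diagonal fun a => (E a * X).trace
  map_add' X Y := by simp only [Matrix.mul_add, trace_add, ← diagonal_add]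
  map_smul' c X := by simp only [Matrix.mul_smul, trace_smul, ← diagonal_smul]; rfl

lemma choiMatrix_measureChannel (E : m → Matrix n n ℂ) :
    choiMatrix (measureChannel E) = ∑ a, (E a)ᵀ ⊗ₖ single a a 1 := by
  ext ⟨i, b⟩ ⟨j, c⟩
  simp only [choiMatrix, measureChannel, LinearMap.coe_mk, AddHom.coe_mk, Matrix.sum_apply,
    kroneckerMap_apply, transpose_apply, trace_mul_single, diagonal_apply, single_apply]
  rcases eq_or_ne b c with rfl | hbc
  · simp
  · rw [if_neg hbc, eq_comm]
    refine Finset.sum_eq_zero fun a _ => ?_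
    rw [if_neg fun h => hbc (h.1.symm.trans h.2), mul_zero]

lemma isCPTP_measureChannel {E : m → Matrix n n ℂ} (hE : ∀ a, (E a).PosSemidef)
    (hsum : ∑ a, E a = 1) : IsCPTP (measureChannel E) := by
  refine ⟨?_, fun X => ?_⟩
  · rw [choiMatrix_measureChannel]
    refine posSemidef_sum _ fun a _ => (hE a).transpose.kronecker ?_
    rw [← diagonal_single]
    exact PosSemidef.diagonal (Pi.single_nonneg.2 zero_le_one)
  · simp only [measureChannel, LinearMap.coe_mk, AddHom.coe_mk, trace_diagonal, ← trace_sum,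
      ← Finset.sum_mul, hsum, Matrix.one_mul]

omit [DecidableEq n] [Fintype m] [DecidableEq m] in
lemma measureChannel_fin_two_apply (E₀ E₁ X : Matrix n n ℂ) :
    measureChannel ![E₀, E₁] X = diagonal ![(E₀ * X).trace, (E₁ * X).trace] := by
  simp only [measureChannel, LinearMap.coe_mk, AddHom.coe_mk]
  congr 1
  ext a
  fin_cases a <;> rfl

end Channel

theorem stmt_6_general {d : ℕ} (ε M : ℝ)
    (𝓟 𝓔 : Set (Matrix (Fin d) (Fin d) ℂ))
    (h𝓟 : ∀ ρ ∈ 𝓟, IsDensityMatrix ρ) (h𝓔 : ∀ τ ∈ 𝓔, IsDensityMatrix τ) :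
    (∃ F : Matrix (Fin d) (Fin d) ℂ →ₗ[ℂ] Matrix (Fin 2) (Fin 2) ℂ,
        IsCPTP F ∧ (∀ ρ ∈ 𝓟, traceDist (F ρ) ket1 ≤ ε) ∧
        (∀ τ ∈ 𝓔, F τ = piM M)) ↔
      (∃ E : Matrix (Fin d) (Fin d) ℂ, IsTest E ∧
        (∀ τ ∈ 𝓔, (E * τ).trace = ((1/M : ℝ) : ℂ)) ∧
        (∀ ρ ∈ 𝓟, ((1 - E) * ρ).trace.re ≤ ε)) := by
  constructor
  · rintro ⟨F, ⟨hChoi, hTP⟩, hP, hE⟩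
    have h1E := one_sub_effectOf_one hTP
    refine ⟨effectOf F 1, ⟨posSemidef_effectOf hChoi 1, h1E ▸ posSemidef_effectOf hChoi 0⟩,
      fun τ hτ => ?_, fun ρ hρ => ?_⟩
    · simp [trace_effectOf_mul, hE τ hτ, piM]
    · rw [h1E, trace_effectOf_mul]
      exact (re_apply_zero_zero_le_traceDist_ket1 _ (by rw [hTP, (h𝓟 ρ hρ).2])).trans (hP ρ hρ)
  · rintro ⟨E, ⟨hE, h1E⟩, hEτ, hEρ⟩
    refine ⟨measureChannel ![1 - E, E],
      isCPTP_measureChannel (Fin.forall_fin_two.2 ⟨h1E, hE⟩) (by simp [Fin.sum_univ_two]),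
      fun ρ hρ => ?_, fun τ hτ => ?_⟩
    · have hp : 0 ≤ ((1 - E) * ρ).trace := h1E.trace_mul_nonneg (h𝓟 ρ hρ).1
      rw [measureChannel_fin_two_apply, traceDist_diagonal_ket1 _ _ (by rw [trace_one_sub_mul_add_trace_mul, (h𝓟 ρ hρ).2]),
        ← Complex.re_eq_norm.2 hp]
      exact hEρ ρ hρ
    · have hsum := trace_one_sub_mul_add_trace_mul E τ
      rw [(h𝓔 τ hτ).2, hEτ τ hτ] at hsum
      rw [measureChannel_fin_two_apply, piM, hEτ τ hτ, eq_sub_of_add_eq hsum]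
      push_cast
      rfl

/-- one-shot work extraction into a clean battery under GPO is
characterized by a subspace-constrained hypothesis test. -/
theorem stmt_6 {d : ℕ} (ε M : ℝ) (hε : ε ∈ Set.Ico (0:ℝ) 1) (hM : 1 < M)
    (𝓟 𝓔 : Set (Matrix (Fin d) (Fin d) ℂ))
    (h𝓟ne : 𝓟.Nonempty) (h𝓔ne : 𝓔.Nonempty)
    (h𝓟 : ∀ ρ ∈ 𝓟, IsDensityMatrix ρ) (h𝓔 : ∀ τ ∈ 𝓔, IsDensityMatrix τ) :
    (∃ F : Matrix (Fin d) (Fin d) ℂ →ₗ[ℂ] Matrix (Fin 2) (Fin 2) ℂ,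
        IsCPTP F ∧ (∀ ρ ∈ 𝓟, traceDist (F ρ) ket1 ≤ ε) ∧
        (∀ τ ∈ 𝓔, F τ = piM M)) ↔
      (∃ E : Matrix (Fin d) (Fin d) ℂ, IsTest E ∧
        (∀ τ ∈ 𝓔, (E * τ).trace = ((1/M : ℝ) : ℂ)) ∧
        (∀ ρ ∈ 𝓟, ((1 - E) * ρ).trace.re ≤ ε)) :=
  stmt_6_general ε M 𝓟 𝓔 h𝓟 h𝓔
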